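/- arXiv:1402.5668 — 5 statements merged into one kernel-verified Lean document; each statement's English description precedes it below -/
import Mathlib

section
/- Let c₀, c₁, …, c_{N−1} ∈ ℂ with c₁ = 0, and suppose the Hermitian Toeplitz matrix R = Toep(c₀, …, c_{N−1}) is positive semidefinite. Then for any k with 2k+1 ≤ N−1, one has |c_{2k}|² + |c_{2k+1}|² ≤ c₀². -/
/-!
On the indices `0, 2k, 2k+1` the matrix `R` restricts to the positive semidefinite matrix
`[[c₀, c̄_{2k}, c̄_{2k+1}], [c_{2k}, c₀, 0], [c_{2k+1}, 0, c₀]]` (using `c₁ = 0`).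
Its quadratic form at `(t, -c_{2k}, -c_{2k+1})` equals `c₀ t² - 2 S t + c₀ S`
with `S = |c_{2k}|² + |c_{2k+1}|²`; this is nonnegative for every real `t`, so the discriminant
bound `S² ≤ c₀² S` gives `S ≤ c₀²`.
-/

open scoped ComplexOrder

open RCLike

namespace Matrix.PosSemidef

variable {𝕜 n : Type*} [RCLike 𝕜] {M : Matrix n n 𝕜}

theorem quadratic_nonneg_of_apply_eq_zero (hM : M.PosSemidef) {i j l : n} (hlj : M l j = 0)
    (hdiag : M j j = M l l) (t : ℝ) :
    0 ≤ re (M i i) * (t * t) + (-2 * (‖M j i‖ ^ 2 + ‖M l i‖ ^ 2)) * t +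
      re (M j j) * (‖M j i‖ ^ 2 + ‖M l i‖ ^ 2) := by
  have hH := hM.isHermitian
  have hquad := (hM.submatrix ![i, j, l]).dotProduct_mulVec_nonneg ![(t : 𝕜), -M j i, -M l i]
  simp only [dotProduct, mulVec, Fin.sum_univ_three, submatrix_apply, Pi.star_apply,
    cons_val_zero, cons_val_one, cons_val] at hquad
  rw [← hH.apply i j, ← hH.apply i l, ← hH.apply j l, hlj, ← hdiag, ← hH.coe_re_apply_self i,
    ← hH.coe_re_apply_self j] at hquad
  simp only [star_def, conj_ofReal, map_neg, map_zero] at hquad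
  rw [← ofReal_nonneg (K := 𝕜)]
  convert hquad using 1
  push_cast
  linear_combination
    (2 * (t : 𝕜) - (re (M j j) : 𝕜)) * (RCLike.conj_mul (M j i) + RCLike.conj_mul (M l i))

theorem sq_norm_add_sq_norm_le (hM : M.PosSemidef) {i j l : n} (hlj : M l j = 0)
    (hdiag : M j j = M l l) :
    ‖M j i‖ ^ 2 + ‖M l i‖ ^ 2 ≤ re (M i i) * re (M j j) := by
  have hdisc := discrim_le_zero (hM.quadratic_nonneg_of_apply_eq_zero (i := i) hlj hdiag)
  have hi : 0 ≤ re (M i i) := (nonneg_iff.mp hM.diag_nonneg).1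
  have hj : 0 ≤ re (M j j) := (nonneg_iff.mp hM.diag_nonneg).1
  rw [discrim] at hdisc
  nlinarith [mul_nonneg hi hj, sq_nonneg ‖M j i‖, sq_nonneg ‖M l i‖]

end Matrix.PosSemidef

theorem toeplitz_posSemidef_pair_sq_le_general
    (N : ℕ) (c : ℤ → ℂ)
    (R : Matrix (Fin N) (Fin N) ℂ)
    (hR : ∀ p q : Fin N, R p q = c ((p : ℤ) - (q : ℤ)))
    (hpsd : R.PosSemidef) (hc1 : c 1 = 0) :
    ∀ k : ℕ, 2 * k + 1 ≤ N - 1 →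
      ‖c (2 * k)‖ ^ 2 + ‖c (2 * k + 1)‖ ^ 2 ≤ (c 0).re ^ 2 := by
  intro k hk
  have h := hpsd.sq_norm_add_sq_norm_le (i := ⟨0, by omega⟩) (j := ⟨2 * k, by omega⟩)
    (l := ⟨2 * k + 1, by omega⟩) (by simpa [hR] using hc1) (by simp [hR])
  simpa [hR, sq] using h

/-- If the Hermitian Toeplitz matrix `R` with entries `R p q = c (p - q)` is positive
semidefinite and `c 1 = 0`, then `|c (2k)|² + |c (2k+1)|² ≤ c₀²` whenever `2k+1 ≤ N-1`. -/
theorem toeplitz_posSemidef_pair_sq_le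
    (N : ℕ) (c : ℤ → ℂ)
    (hherm : ∀ k : ℤ, c (-k) = starRingEnd ℂ (c k))
    (R : Matrix (Fin N) (Fin N) ℂ)
    (hR : ∀ p q : Fin N, R p q = c ((p : ℤ) - (q : ℤ)))
    (hpsd : R.PosSemidef) (hc1 : c 1 = 0) :
    ∀ k : ℕ, 2 * k + 1 ≤ N - 1 →
      ‖c (2 * k)‖ ^ 2 + ‖c (2 * k + 1)‖ ^ 2 ≤ (c 0).re ^ 2 :=
  toeplitz_posSemidef_pair_sq_le_general N c R hR hpsd hc1
end

section
/- Let c₀, c₁, …, c_{N−1} ∈ ℂ with c₁ = 0, and suppose the Hermitian Toeplitz matrix R = Toep(c₀, …, c_{N−1}) is positive semidefinite. Then ∑_{p=2}^{N−1} |c_p|²/(p²−1) ≤ (c₀²/2)(1 − 1/N). -/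
/-!
Positive semidefiniteness of the principal submatrix of `R` on the indices `0, p, p + 1` forces
`|c_p|² + |c_{p+1}|² ≤ c₀²`, because `c₁ = 0` kills the entry coupling `p` and `p + 1`.
Writing `1 / (p² - 1) = 1 / (2 (p - 1) p) + 1 / (2 p (p + 1))` and regrouping the sum by
consecutive pairs, the series is bounded by `∑_{p=2}^{N} c₀² / (2 (p - 1) p) = (c₀² / 2)(1 - 1/N)`.
-/

open scoped ComplexOrder

theorem Matrix.PosSemidef.norm_sq_add_norm_sq_le {n : Type*} {M : Matrix n n ℂ}
    (hM : M.PosSemidef) {i j k : n} (hj : M j j = M i i) (hk : M k k = M i i) (hkj : M k j = 0) :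
    ‖M j i‖ ^ 2 + ‖M k i‖ ^ 2 ≤ (M i i).re ^ 2 := by
  obtain ⟨a, ha⟩ : ∃ a : ℝ, M i i = a :=
    ⟨_, Complex.eq_re_of_ofReal_le (r := 0) (by rw [Complex.ofReal_zero]; exact hM.diag_nonneg)⟩
  have hjk : M j k = 0 := by rw [← hM.isHermitian.apply, hkj, star_zero]
  set B := ‖M j i‖ ^ 2 + ‖M k i‖ ^ 2
  -- the form at `(t, M j i, M k i)`; nonnegativity for all real `t` bounds the discriminant
  have hquad : ∀ t : ℝ, 0 ≤ a * (t * t) + 2 * B * t + a * B := by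
    intro t
    have h := (hM.submatrix ![i, j, k]).dotProduct_mulVec_nonneg ![(t : ℂ), M j i, M k i]
    simp only [dotProduct, Matrix.mulVec, Fin.sum_univ_three, Matrix.submatrix_apply, Pi.star_apply,
      Matrix.cons_val_zero, Matrix.cons_val_one, Matrix.cons_val_two, Matrix.head_cons,
      Matrix.tail_cons, ← hM.isHermitian.apply i j, ← hM.isHermitian.apply i k, hj, hk, hjk, hkj,
      ha] at h
    have hB : (B : ℂ) = star (M j i) * M j i + star (M k i) * M k i := by
      simp only [B, RCLike.star_def, Complex.conj_mul']
      push_cast; ring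
    have : 0 ≤ ((a * (t * t) + 2 * B * t + a * B : ℝ) : ℂ) := by
      convert h using 1
      push_cast [hB]
      simp only [Complex.star_def, Complex.conj_ofReal]
      ring
    exact_mod_cast this
  have hdisc := discrim_le_zero hquad
  rw [discrim] at hdisc
  rw [ha, Complex.ofReal_re]
  nlinarith [sq_nonneg a, show 0 ≤ B by positivity]

theorem norm_sq_add_norm_sq_le_of_toeplitz {N : ℕ} {c : ℤ → ℂ} {R : Matrix (Fin N) (Fin N) ℂ}
    (hR : ∀ p q : Fin N, R p q = c ((p : ℤ) - (q : ℤ))) (hpsd : R.PosSemidef) (hc1 : c 1 = 0)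
    {p : ℕ} (hp : p + 1 < N) :
    ‖c p‖ ^ 2 + ‖c (p + 1)‖ ^ 2 ≤ (c 0).re ^ 2 := by
  simpa [hR] using hpsd.norm_sq_add_norm_sq_le (i := ⟨0, by omega⟩) (j := ⟨p, by omega⟩)
    (k := ⟨p + 1, hp⟩) (by simp [hR]) (by simp [hR]) (by simp [hR, hc1])

theorem sum_Icc_div_sq_sub_one_le_of_add_le {b : ℕ → ℝ} {A : ℝ} (hb1 : b 1 = 0) {n : ℕ}
    (hn : 1 ≤ n) (hadj : ∀ p, 1 ≤ p → p < n → b p + b (p + 1) ≤ A) :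
    ∑ p ∈ Finset.Icc 2 n, b p / ((p : ℝ) ^ 2 - 1) ≤ A / 2 * (1 - 1 / n) + b n / (2 * n * (n + 1)) := by
  induction n, hn using Nat.le_induction with
  | base => simp [hb1]
  | succ n hn ih =>
    have hm : (1 : ℝ) ≤ n := by exact_mod_cast hn
    have hpair : b n / (2 * n * (n + 1)) + b (n + 1) / (2 * n * (n + 1))
        ≤ A / (2 * n * (n + 1)) := by
      rw [← add_div]
      gcongr
      exact hadj n hn (by omega)
    have hsplit : b (n + 1) / (((n : ℝ) + 1) ^ 2 - 1)
        = b (n + 1) / (2 * n * (n + 1)) + b (n + 1) / (2 * (n + 1) * (n + 1 + 1)) := by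
      rw [show ((n : ℝ) + 1) ^ 2 - 1 = n * (n + 2) by ring]
      field_simp
      ring
    have hstep : A / 2 * (1 - 1 / ((n : ℝ) + 1)) = A / 2 * (1 - 1 / n) + A / (2 * n * (n + 1)) := by
      field_simp
      ring
    rw [Finset.sum_Icc_succ_top (by omega)]
    push_cast
    rw [hsplit, hstep]
    linarith [ih fun p hp hpn ↦ hadj p hp (by omega)]

theorem sum_Icc_div_sq_sub_one_le {b : ℕ → ℝ} {A : ℝ} (hb : ∀ p, 0 ≤ b p) (hA : 0 ≤ A)
    (hb1 : b 1 = 0) {N : ℕ} (hadj : ∀ p, 1 ≤ p → p + 1 < N → b p + b (p + 1) ≤ A) :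
    ∑ p ∈ Finset.Icc 2 (N - 1), b p / ((p : ℝ) ^ 2 - 1) ≤ A / 2 * (1 - 1 / N) := by
  rcases le_or_gt N 1 with hN | hN
  · interval_cases N <;> simp
    positivity
  obtain ⟨n, rfl⟩ : ∃ n, N = n + 1 := ⟨N - 1, by omega⟩
  have hn : 1 ≤ n := by omega
  have hlast : b n ≤ A := by
    obtain rfl | hn' := hn.eq_or_lt
    · exact hb1 ▸ hA
    · linarith [hb (n - 1), Nat.sub_add_cancel hn ▸ hadj (n - 1) (by omega) (by omega)]
  have hm : (1 : ℝ) ≤ n := by exact_mod_cast hn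
  have hstep : A / 2 * (1 - 1 / ((n : ℝ) + 1)) = A / 2 * (1 - 1 / n) + A / (2 * n * (n + 1)) := by
    field_simp
    ring
  have : b n / (2 * n * (n + 1)) ≤ A / (2 * n * (n + 1)) := by gcongr
  push_cast
  rw [hstep]
  linarith [sum_Icc_div_sq_sub_one_le_of_add_le hb1 hn fun p hp hpn ↦ hadj p hp (by omega)]

theorem toeplitz_posSemidef_series_estimate_general
    (N : ℕ) (c : ℤ → ℂ)
    (R : Matrix (Fin N) (Fin N) ℂ)
    (hR : ∀ p q : Fin N, R p q = c ((p : ℤ) - (q : ℤ)))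
    (hpsd : R.PosSemidef) (hc1 : c 1 = 0) :
    ∑ p ∈ Finset.Icc 2 (N - 1), ‖c (p : ℤ)‖ ^ 2 / ((p : ℝ) ^ 2 - 1)
      ≤ (c 0).re ^ 2 / 2 * (1 - 1 / (N : ℝ)) :=
  sum_Icc_div_sq_sub_one_le (b := fun p ↦ ‖c p‖ ^ 2) (fun _ ↦ by positivity) (sq_nonneg _)
    (by simp [hc1]) fun _ _ hp ↦ norm_sq_add_norm_sq_le_of_toeplitz hR hpsd hc1 hp

/-- If the Hermitian Toeplitz matrix `R` with entries `R p q = c (p - q)` is positive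
semidefinite and `c 1 = 0`, then `∑_{p=2}^{N-1} |c p|²/(p² - 1) ≤ (c₀²/2)(1 - 1/N)`. -/
theorem toeplitz_posSemidef_series_estimate
    (N : ℕ) (c : ℤ → ℂ)
    (hherm : ∀ k : ℤ, c (-k) = starRingEnd ℂ (c k))
    (R : Matrix (Fin N) (Fin N) ℂ)
    (hR : ∀ p q : Fin N, R p q = c ((p : ℤ) - (q : ℤ)))
    (hpsd : R.PosSemidef) (hc1 : c 1 = 0) :
    ∑ p ∈ Finset.Icc 2 (N - 1), ‖c (p : ℤ)‖ ^ 2 / ((p : ℝ) ^ 2 - 1)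
      ≤ (c 0).re ^ 2 / 2 * (1 - 1 / (N : ℝ)) :=
  toeplitz_posSemidef_series_estimate_general N c R hR hpsd hc1
end

section
/- Let P₀ = diag(p₀, p₁, …, p_{N−1}, q₀, q₁, …, q_{N−1}) be a real n×n matrix with n = 2N, p₀ < 0, q₀ ≤ 0, p₁ = q₁ = 0, and p_k, q_k > 0 for k = 2,…,N−1. Let A be the 2×n matrix with rows (αᵀ, βᵀ) and (0_Nᵀ, e₁ᵀ), where α, β ∈ ℝ^N satisfy α₁ = β₁ = 0. If ϱ > −q₀ ≥ 0 and ∑_{k=2}^{N−1}(α_k²/p_k + β_k²/q_k) ≤ α₀²/(−p₀) − 1/ϱ − β₀²/(q₀+ϱ), then P₀ + ϱ AᵀA is positive semidefinite. -/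
/-!
Write `x = (X, Y)`. Since `p₁ = q₁ = α₁ = β₁ = 0`, the quadratic form of `P₀ + ϱ AᵀA` is
`p₀X₀² + (q₀+ϱ)Y₀² + ϱ s² + Σ_{k≥2} (p_k X_k² + q_k Y_k²)` with `s = αᵀX + βᵀY`, and the only
negative term is `p₀X₀²`. Writing `α₀X₀ = s - β₀Y₀ - Σ_{k≥2} (α_k X_k + β_k Y_k)`, weighted
Cauchy–Schwarz gives `(α₀X₀)² ≤ K·R`, where `R` is the remaining (nonnegative) part of the form and
`K = 1/ϱ + β₀²/(q₀+ϱ) + Σ_{k≥2} (α_k²/p_k + β_k²/q_k) ≤ α₀²/(-p₀)` by hypothesis; hence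
`-p₀X₀² ≤ R`.
-/

open Finset Matrix

lemma sq_add_le_add_mul_add {a b f₁ f₂ g₁ g₂ : ℝ} (hf₁ : 0 ≤ f₁) (hf₂ : 0 ≤ f₂)
    (hg₁ : 0 ≤ g₁) (hg₂ : 0 ≤ g₂) (ha : a ^ 2 ≤ f₁ * g₁) (hb : b ^ 2 ≤ f₂ * g₂) :
    (a + b) ^ 2 ≤ (f₁ + f₂) * (g₁ + g₂) := by
  simpa using Finset.sum_sq_le_sum_mul_sum_of_sq_le_mul univ (r := ![a, b]) (f := ![f₁, f₂])
    (g := ![g₁, g₂]) (by simp [Fin.forall_fin_two, *]) (by simp [Fin.forall_fin_two, *])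
    (by simp [Fin.forall_fin_two, *])

lemma mul_sq_eq_sq_div_mul_mul (a z : ℝ) {w : ℝ} (hw : w ≠ 0) :
    (a * z) ^ 2 = a ^ 2 / w * (w * z ^ 2) := by
  field_simp

lemma sq_sum_add_le_sum_mul_sum {ι : Type*} (s : Finset ι) {a b w v : ι → ℝ}
    (hw : ∀ i ∈ s, 0 < w i) (hv : ∀ i ∈ s, 0 < v i) (x y : ι → ℝ) :
    (∑ i ∈ s, (a i * x i + b i * y i)) ^ 2 ≤
      (∑ i ∈ s, (a i ^ 2 / w i + b i ^ 2 / v i)) * ∑ i ∈ s, (w i * x i ^ 2 + v i * y i ^ 2) := by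
  refine sum_sq_le_sum_mul_sum_of_sq_le_mul s (fun i hi => ?_) (fun i hi => ?_) fun i hi => ?_
  · have := hw i hi; have := hv i hi; positivity
  · have := hw i hi; have := hv i hi; positivity
  · have := hw i hi; have := hv i hi
    exact sq_add_le_add_mul_add (by positivity) (by positivity) (by positivity) (by positivity)
      (mul_sq_eq_sq_div_mul_mul _ _ (hw i hi).ne').le
      (mul_sq_eq_sq_div_mul_mul _ _ (hv i hi).ne').le

lemma neg_mul_sq_le_of_sq_mul_le_mul {p a x K R : ℝ} (hp : p < 0) (hK : 0 < K) (hR : 0 ≤ R)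
    (hKa : K ≤ a ^ 2 / -p) (h : (a * x) ^ 2 ≤ K * R) : -p * x ^ 2 ≤ R := by
  have hKp : K * -p ≤ a ^ 2 := (le_div_iff₀ (by linarith)).mp hKa
  have ha : 0 < a ^ 2 := lt_of_lt_of_le (by nlinarith) hKp
  refine le_of_mul_le_mul_left ?_ ha
  calc a ^ 2 * (-p * x ^ 2) = -p * (a * x) ^ 2 := by ring
    _ ≤ -p * (K * R) := by gcongr; linarith
    _ = (K * -p) * R := by ring
    _ ≤ a ^ 2 * R := by gcongr

lemma mul_sq_add_mul_sq_add_mul_sq_add_nonneg {p c ϱ a b x y u S T : ℝ} (hp : p < 0)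
    (hc : 0 < c) (hϱ : 0 < ϱ) (hS : 0 ≤ S) (hT : 0 ≤ T) (hu : u ^ 2 ≤ S * T)
    (hK : 1 / ϱ + b ^ 2 / c + S ≤ a ^ 2 / -p) :
    0 ≤ p * x ^ 2 + c * y ^ 2 + ϱ * (a * x + b * y + u) ^ 2 + T := by
  set s := a * x + b * y + u
  have hR : 0 ≤ ϱ * s ^ 2 + c * y ^ 2 + T := by positivity
  have hCS : (a * x) ^ 2 ≤ (1 / ϱ + b ^ 2 / c + S) * (ϱ * s ^ 2 + c * y ^ 2 + T) := by
    have hs := (mul_sq_eq_sq_div_mul_mul 1 s hϱ.ne').le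
    have hy := (mul_sq_eq_sq_div_mul_mul (-b) y hc.ne').le
    rw [one_pow, one_mul] at hs
    rw [neg_sq] at hy
    have := sq_add_le_add_mul_add (by positivity) hS (by positivity) hT
      (sq_add_le_add_mul_add (by positivity) (by positivity) (by positivity) (by positivity) hs hy)
      (show (-u) ^ 2 ≤ S * T by rwa [neg_sq])
    convert this using 2; ring
  have := neg_mul_sq_le_of_sq_mul_le_mul hp (by positivity) hR hK hCS
  linarith

lemma Fin.sum_univ_eq_zero_add_sum_filter_two_le {N : ℕ} [NeZero N] (hN : 2 ≤ N)
    {M : Type*} [AddCommMonoid M] {f : Fin N → M} (hf : f 1 = 0) :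
    ∑ k, f k = f 0 + ∑ k ∈ univ.filter (fun k : Fin N => 2 ≤ (k : ℕ)), f k := by
  have h1 : ((1 : Fin N) : ℕ) = 1 := by rw [Fin.val_one', Nat.mod_eq_of_lt (by omega)]
  rw [← sum_filter_add_sum_filter_not univ (fun k : Fin N => 2 ≤ (k : ℕ)), add_comm]
  congr 1
  have : univ.filter (fun k : Fin N => ¬ 2 ≤ (k : ℕ)) = {0, 1} := by
    ext k
    simp only [mem_filter, mem_univ, true_and, mem_insert, mem_singleton, Fin.ext_iff, h1,
      Fin.val_zero, not_le]
    omega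
  rw [this, sum_pair (by simp [Fin.ext_iff]; omega), hf, add_zero]

lemma quadForm_P0_add_rho_ATA_nonneg {N : ℕ} [NeZero N] (hN : 2 ≤ N) {p q α β : Fin N → ℝ}
    (hp0 : p 0 < 0) (hq0 : q 0 ≤ 0) (hp1 : p 1 = 0) (hq1 : q 1 = 0)
    (hpk : ∀ k : Fin N, 2 ≤ (k : ℕ) → 0 < p k)
    (hqk : ∀ k : Fin N, 2 ≤ (k : ℕ) → 0 < q k)
    (hα1 : α 1 = 0) (hβ1 : β 1 = 0) {ϱ : ℝ} (hϱ : -q 0 < ϱ)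
    (hsum : ∑ k ∈ univ.filter (fun k : Fin N => 2 ≤ (k : ℕ)), (α k ^ 2 / p k + β k ^ 2 / q k)
      ≤ α 0 ^ 2 / -p 0 - 1 / ϱ - β 0 ^ 2 / (q 0 + ϱ))
    (x y : Fin N → ℝ) :
    0 ≤ ∑ k, p k * x k ^ 2 + ∑ k, q k * y k ^ 2 +
      ϱ * ((∑ k, α k * x k + ∑ k, β k * y k) ^ 2 + y 0 ^ 2) := by
  set F := univ.filter (fun k : Fin N => 2 ≤ (k : ℕ))
  have hpF : ∀ k ∈ F, 0 < p k := fun k hk => hpk k (mem_filter.mp hk).2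
  have hqF : ∀ k ∈ F, 0 < q k := fun k hk => hqk k (mem_filter.mp hk).2
  have hS : 0 ≤ ∑ k ∈ F, (α k ^ 2 / p k + β k ^ 2 / q k) := sum_nonneg fun k hk => by
    have := hpF k hk; have := hqF k hk; positivity
  have hT : 0 ≤ ∑ k ∈ F, (p k * x k ^ 2 + q k * y k ^ 2) := sum_nonneg fun k hk => by
    have := hpF k hk; have := hqF k hk; positivity
  have key := mul_sq_add_mul_sq_add_mul_sq_add_nonneg (a := α 0) (b := β 0) (x := x 0)
    (y := y 0) hp0 (by linarith : 0 < q 0 + ϱ) (by linarith : 0 < ϱ) hS hT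
    (sq_sum_add_le_sum_mul_sum F hpF hqF x y) (by linarith)
  rw [← sum_add_distrib, ← sum_add_distrib,
    Fin.sum_univ_eq_zero_add_sum_filter_two_le hN (by simp [hp1, hq1]),
    Fin.sum_univ_eq_zero_add_sum_filter_two_le hN (by simp [hα1, hβ1])]
  linear_combination key

lemma dotProduct_diagonal_add_smul_transpose_mul_self_mulVec {m n : Type*} [Fintype m]
    [Fintype n] [DecidableEq n] (d : n → ℝ) (ϱ : ℝ) (A : Matrix m n ℝ) (x : n → ℝ) :
    x ⬝ᵥ ((diagonal d + ϱ • (Aᵀ * A)) *ᵥ x) = ∑ i, d i * x i ^ 2 + ϱ * ∑ j, (A *ᵥ x) j ^ 2 := by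
  have hAA : x ⬝ᵥ ((Aᵀ * A) *ᵥ x) = (A *ᵥ x) ⬝ᵥ (A *ᵥ x) := by
    rw [← mulVec_mulVec, dotProduct_mulVec, vecMul_transpose]
  rw [add_mulVec, dotProduct_add, smul_mulVec, dotProduct_smul, hAA, smul_eq_mul]
  simp only [dotProduct, mulVec_diagonal]
  congr 1
  · exact sum_congr rfl fun i _ => by ring
  · exact congrArg _ (sum_congr rfl fun j _ => by ring)

/-- Let `P₀ = diag(p₀,…,p_{N-1},q₀,…,q_{N-1})` with `p₀ < 0`, `q₀ ≤ 0`, `p₁ = q₁ = 0`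
and `p_k, q_k > 0` for `k ≥ 2`, and let `A` be the `2 × 2N` matrix with rows `(αᵀ, βᵀ)`
and `(0ᵀ, e₁ᵀ)` where `α₁ = β₁ = 0`. If `ϱ > -q₀ ≥ 0` and
`∑_{k≥2} (α_k²/p_k + β_k²/q_k) ≤ α₀²/(-p₀) - 1/ϱ - β₀²/(q₀+ϱ)`,
then `P₀ + ϱ AᵀA` is positive semidefinite. -/
theorem P0_add_rho_ATA_posSemidef
    (N : ℕ) [NeZero N] (hN : 2 ≤ N)
    (p q α β : Fin N → ℝ)
    (hp0 : p 0 < 0) (hq0 : q 0 ≤ 0) (hp1 : p 1 = 0) (hq1 : q 1 = 0)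
    (hpk : ∀ k : Fin N, 2 ≤ (k : ℕ) → 0 < p k)
    (hqk : ∀ k : Fin N, 2 ≤ (k : ℕ) → 0 < q k)
    (hα1 : α 1 = 0) (hβ1 : β 1 = 0)
    (A : Matrix (Fin 2) (Fin N ⊕ Fin N) ℝ)
    (hA0 : ∀ j, A 0 j = Sum.elim α β j)
    (hA1 : ∀ j, A 1 j = Sum.elim (fun _ => (0 : ℝ)) (fun i => if i = 0 then 1 else 0) j)
    (ϱ : ℝ) (hϱ : -q 0 < ϱ)
    (hsum : ∑ k ∈ Finset.univ.filter (fun k : Fin N => 2 ≤ (k : ℕ)),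
        (α k ^ 2 / p k + β k ^ 2 / q k)
      ≤ α 0 ^ 2 / (-(p 0)) - 1 / ϱ - β 0 ^ 2 / (q 0 + ϱ)) :
    (Matrix.diagonal (Sum.elim p q) + ϱ • (A.transpose * A)).PosSemidef := by
  have hHerm : (diagonal (Sum.elim p q) + ϱ • (Aᵀ * A)).IsHermitian :=
    (isHermitian_diagonal _).add ((posSemidef_conjTranspose_mul_self A).isHermitian.smul (.all ϱ))
  refine PosSemidef.of_dotProduct_mulVec_nonneg hHerm fun x => ?_
  have hAx0 : (A *ᵥ x) 0 = ∑ k, α k * x (.inl k) + ∑ k, β k * x (.inr k) := by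
    simp [mulVec, dotProduct, hA0, Fintype.sum_sum_type]
  have hAx1 : (A *ᵥ x) 1 = x (.inr 0) := by
    simp [mulVec, dotProduct, hA1, Fintype.sum_sum_type]
  rw [star_trivial, dotProduct_diagonal_add_smul_transpose_mul_self_mulVec, Fin.sum_univ_two,
    hAx0, hAx1, Fintype.sum_sum_type]
  exact quadForm_P0_add_rho_ATA_nonneg hN hp0 hq0 hp1 hq1 hpk hqk hα1 hβ1 hϱ hsum _ _
end

section
/- Let D be an invertible symmetric positive definite matrix, v a vector, ϱ > 0, p₀ < 0, α₀ ∈ ℝ. Then the 2-block matrix ((p₀ + ϱα₀², ϱα₀vᵀ), (ϱα₀v, D + ϱvvᵀ)) is positive semidefinite if and only if vᵀD⁻¹v ≤ α₀²/(−p₀) − 1/ϱ. -/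
/-!
By the Schur complement criterion, the block matrix is positive semidefinite iff the scalar
`p₀ + ϱα₀² - (ϱα₀)² vᵀB⁻¹v` is nonnegative, where `B = D + ϱvvᵀ` is positive definite.
Sherman–Morrison gives `B⁻¹v = D⁻¹v / (1 + ϱγ)` with `γ = vᵀD⁻¹v`, so the Schur complement
equals `(p₀(1 + ϱγ) + ϱα₀²) / (1 + ϱγ)`, and its sign condition rearranges to the bound on `γ`.
-/

namespace Matrix

theorem posSemidef_iff_of_unique {ι R : Type*} [Unique ι] [CommRing R] [PartialOrder R]
    [StarRing R] [StarOrderedRing R] (A : Matrix ι ι R) :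
    A.PosSemidef ↔ 0 ≤ A default default := by
  have hA : A = diagonal fun _ => A default default := by
    ext i j
    simp [Subsingleton.elim i default, Subsingleton.elim j default]
  rw [hA, posSemidef_diagonal_iff]
  simp

theorem replicateRow_mul_mul_conjTranspose_replicateRow_apply {ι m R : Type*} [Fintype m]
    [CommSemiring R] [StarRing R] (w : m → R) (M : Matrix m m R) (i j : ι) :
    (replicateRow ι w * M * (replicateRow ι w)ᴴ) i j = w ⬝ᵥ M *ᵥ star w := by
  rw [conjTranspose_replicateRow, Matrix.mul_assoc, ← replicateCol_mulVec,
    replicateRow_mul_replicateCol_apply]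

section ShermanMorrison

variable {n K : Type*} [Fintype n] [DecidableEq n] [Field K]

theorem add_smul_vecMulVec_mulVec_inv_mulVec {D : Matrix n n K} (hD : IsUnit D.det)
    (ϱ : K) (v : n → K) :
    (D + ϱ • vecMulVec v v) *ᵥ (D⁻¹ *ᵥ v) = (1 + ϱ * (v ⬝ᵥ D⁻¹ *ᵥ v)) • v := by
  rw [add_mulVec, mulVec_mulVec, mul_nonsing_inv D hD, one_mulVec, smul_mulVec,
    vecMulVec_mulVec, op_smul_eq_smul, add_smul, one_smul, mul_smul]

theorem inv_add_smul_vecMulVec_mulVec {D : Matrix n n K} (hD : IsUnit D.det) {ϱ : K}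
    {v : n → K} (hB : IsUnit (D + ϱ • vecMulVec v v).det)
    (hc : 1 + ϱ * (v ⬝ᵥ D⁻¹ *ᵥ v) ≠ 0) :
    (D + ϱ • vecMulVec v v)⁻¹ *ᵥ v = (1 + ϱ * (v ⬝ᵥ D⁻¹ *ᵥ v))⁻¹ • D⁻¹ *ᵥ v := by
  calc (D + ϱ • vecMulVec v v)⁻¹ *ᵥ v
      = (1 + ϱ * (v ⬝ᵥ D⁻¹ *ᵥ v))⁻¹ •
          (D + ϱ • vecMulVec v v)⁻¹ *ᵥ ((1 + ϱ * (v ⬝ᵥ D⁻¹ *ᵥ v)) • v) := by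
        rw [mulVec_smul, inv_smul_smul₀ hc]
    _ = (1 + ϱ * (v ⬝ᵥ D⁻¹ *ᵥ v))⁻¹ • D⁻¹ *ᵥ v := by
        rw [← add_smul_vecMulVec_mulVec_inv_mulVec hD, mulVec_mulVec, nonsing_inv_mul _ hB,
          one_mulVec]

theorem dotProduct_inv_add_smul_vecMulVec_mulVec {D : Matrix n n K} (hD : IsUnit D.det)
    {ϱ : K} {v : n → K} (hB : IsUnit (D + ϱ • vecMulVec v v).det)
    (hc : 1 + ϱ * (v ⬝ᵥ D⁻¹ *ᵥ v) ≠ 0) :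
    v ⬝ᵥ (D + ϱ • vecMulVec v v)⁻¹ *ᵥ v = (v ⬝ᵥ D⁻¹ *ᵥ v) / (1 + ϱ * (v ⬝ᵥ D⁻¹ *ᵥ v)) := by
  rw [inv_add_smul_vecMulVec_mulVec hD hB hc, dotProduct_smul, smul_eq_mul, inv_mul_eq_div]

end ShermanMorrison

end Matrix

theorem schur_entry_nonneg_iff {ϱ p a γ : ℝ} (hϱ : 0 < ϱ) (hp : p < 0) (hγ : 0 ≤ γ) :
    0 ≤ p + ϱ * a ^ 2 - (ϱ * a) ^ 2 * (γ / (1 + ϱ * γ)) ↔ γ ≤ a ^ 2 / (-p) - 1 / ϱ := by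
  have hc : 0 < 1 + ϱ * γ := by positivity
  have hlhs : p + ϱ * a ^ 2 - (ϱ * a) ^ 2 * (γ / (1 + ϱ * γ))
      = (p * (1 + ϱ * γ) + ϱ * a ^ 2) / (1 + ϱ * γ) := by
    field_simp
    ring
  have hrhs : a ^ 2 / (-p) - 1 / ϱ = (ϱ * a ^ 2 + p) / (ϱ * (-p)) := by
    have := hp.ne
    field_simp
    ring
  rw [hlhs, hrhs, le_div_iff₀ hc, zero_mul, le_div_iff₀ (by nlinarith)]
  constructor <;> intro h <;> nlinarith

open Matrix in
/-- Schur-complement criterion: for `D` symmetric positive definite (hence invertible),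
`ϱ > 0`, `p₀ < 0`, the block matrix `((p₀ + ϱα₀², ϱα₀vᵀ), (ϱα₀v, D + ϱvvᵀ))` is positive
semidefinite if and only if `vᵀD⁻¹v ≤ α₀²/(-p₀) - 1/ϱ`. -/
theorem schur_block_posSemidef_iff
    (n : ℕ) (D : Matrix (Fin n) (Fin n) ℝ) (hD : D.PosDef)
    (v : Fin n → ℝ) (ϱ p₀ α₀ : ℝ) (hϱ : 0 < ϱ) (hp₀ : p₀ < 0) :
    (Matrix.fromBlocks
        (Matrix.of fun _ _ : Fin 1 => p₀ + ϱ * α₀ ^ 2)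
        (Matrix.of fun (_ : Fin 1) (j : Fin n) => ϱ * α₀ * v j)
        (Matrix.of fun (i : Fin n) (_ : Fin 1) => ϱ * α₀ * v i)
        (D + ϱ • Matrix.vecMulVec v v)).PosSemidef
      ↔ dotProduct v (D⁻¹.mulVec v) ≤ α₀ ^ 2 / (-p₀) - 1 / ϱ := by
  set B := D + ϱ • vecMulVec v v
  have hB : B.PosDef := hD.add_posSemidef <| by
    simpa using (posSemidef_vecMulVec_self_star v).smul hϱ.le
  have hγ : 0 ≤ v ⬝ᵥ D⁻¹ *ᵥ v := by
    simpa using hD.inv.posSemidef.dotProduct_mulVec_nonneg v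
  have hinv : v ⬝ᵥ B⁻¹ *ᵥ v = (v ⬝ᵥ D⁻¹ *ᵥ v) / (1 + ϱ * (v ⬝ᵥ D⁻¹ *ᵥ v)) :=
    dotProduct_inv_add_smul_vecMulVec_mulVec ((isUnit_iff_isUnit_det _).mp hD.isUnit)
      ((isUnit_iff_isUnit_det _).mp hB.isUnit) (by positivity)
  have hrow : (of fun (_ : Fin 1) (j : Fin n) => ϱ * α₀ * v j)
      = replicateRow (Fin 1) ((ϱ * α₀) • v) := rfl
  have hcol : (of fun (i : Fin n) (_ : Fin 1) => ϱ * α₀ * v i)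
      = (replicateRow (Fin 1) ((ϱ * α₀) • v))ᴴ := by
    ext
    simp
  have := hB.isUnit.invertible
  rw [hrow, hcol, PosDef.fromBlocks₂₂ _ _ hB, posSemidef_iff_of_unique]
  rw [Matrix.sub_apply, replicateRow_mul_mul_conjTranspose_replicateRow_apply, star_trivial,
    mulVec_smul,
    dotProduct_smul, smul_dotProduct, hinv, of_apply, smul_eq_mul, smul_eq_mul,
    ← mul_assoc, ← sq]
  exact schur_entry_nonneg_iff hϱ hp₀ hγ
end

section
/- Consider the feasibility sets of the nonconvex quadratic problem (P): min xᵀP₀x + 2q₀ᵀx + r₀ subject to xᵀP_lx + 2q_lᵀx + r_l ≤ 0 (l = 1,…,d), Ax = b, and its enhanced semidefinite relaxation (D3): min tr(P₀X) + 2q₀ᵀx + r₀ subject to tr(P_lX) + 2q_lᵀx + r_l ≤ 0, Ax = b, AX = bxᵀ, X ⪰ xxᵀ. If P_l ⪰ 0 for l ≥ 1 and there exists a matrix V with P₀ + (1/2)(VᵀA + AᵀV) ⪰ 0, then the optimal values of (P) and (D3) coincide; moreover if (x̃, X̃) is optimal for (D3) then x̃ is optimal for (P). -/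
/-!
Every `x` feasible for (P) lifts to the (D3)-feasible pair `(x, xxᵀ)` with the same objective.
Conversely, if `(x, X)` is feasible for (D3), then `M = X - xxᵀ ⪰ 0` satisfies `AM = 0`, so
`tr((VᵀA + AᵀV)M) = 0` and `tr(P₀M) = tr((P₀ + ½(VᵀA + AᵀV))M) ≥ 0`, while `tr(P_l M) ≥ 0`
directly. Hence `x` is feasible for (P), with objective at most that of `(x, X)`.
-/

open Matrix

section LiftedRelaxation

variable {α β : Type*} {feas : α → Prop} {obj : α → ℝ} {feasR : α → β → Prop}
  {objR : α → β → ℝ}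

theorem sInf_relaxation_eq (hlift : ∀ x, feas x → ∃ X, feasR x X ∧ objR x X ≤ obj x)
    (hproj : ∀ x X, feasR x X → feas x ∧ obj x ≤ objR x X) :
    sInf {v : EReal | ∃ x, feas x ∧ v = obj x} =
      sInf {v : EReal | ∃ x X, feasR x X ∧ v = objR x X} := by
  apply le_antisymm
  · refine le_sInf ?_
    rintro _ ⟨x, X, hxX, rfl⟩
    obtain ⟨hx, hle⟩ := hproj x X hxX
    exact le_trans (sInf_le ⟨x, hx, rfl⟩) (EReal.coe_le_coe hle)
  · refine le_sInf ?_
    rintro _ ⟨x, hx, rfl⟩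
    obtain ⟨X, hxX, hle⟩ := hlift x hx
    exact le_trans (sInf_le ⟨x, X, hxX, rfl⟩) (EReal.coe_le_coe hle)

theorem optimal_of_relaxation_optimal
    (hlift : ∀ x, feas x → ∃ X, feasR x X ∧ objR x X ≤ obj x)
    (hproj : ∀ x X, feasR x X → feas x ∧ obj x ≤ objR x X) {x : α} {X : β}
    (hxX : feasR x X)
    (hopt : (objR x X : EReal) = sInf {v : EReal | ∃ x X, feasR x X ∧ v = objR x X}) :
    feas x ∧ (obj x : EReal) = sInf {v : EReal | ∃ x, feas x ∧ v = obj x} := by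
  obtain ⟨hx, hle⟩ := hproj x X hxX
  refine ⟨hx, le_antisymm ?_ (sInf_le ⟨x, hx, rfl⟩)⟩
  calc (obj x : EReal) ≤ objR x X := EReal.coe_le_coe hle
    _ = _ := hopt
    _ = _ := (sInf_relaxation_eq hlift hproj).symm

end LiftedRelaxation

namespace Matrix

variable {m n : Type*} [Fintype n]

theorem trace_mul_vecMulVec_self {R : Type*} [CommSemiring R] (Q : Matrix n n R) (x : n → R) :
    (Q * vecMulVec x x).trace = x ⬝ᵥ Q *ᵥ x := by
  rw [mul_vecMulVec, trace_vecMulVec, dotProduct_comm]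

theorem trace_mul_sub_vecMulVec_self {R : Type*} [CommRing R] (Q X : Matrix n n R)
    (x : n → R) : (Q * (X - vecMulVec x x)).trace = (Q * X).trace - x ⬝ᵥ Q *ᵥ x := by
  rw [Matrix.mul_sub, trace_sub, trace_mul_vecMulVec_self]

open scoped ComplexOrder in
theorem PosSemidef.trace_mul_nonneg {𝕜 : Type*} [RCLike 𝕜] {Q M : Matrix n n 𝕜}
    (hQ : Q.PosSemidef) (hM : M.PosSemidef) : 0 ≤ (Q * M).trace := by
  obtain ⟨k, v, rfl⟩ := posSemidef_iff_eq_sum_vecMulVec.mp hM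
  rw [Matrix.mul_sum, trace_sum]
  refine Finset.sum_nonneg fun i _ => ?_
  rw [mul_vecMulVec, trace_vecMulVec, dotProduct_comm]
  exact hQ.dotProduct_mulVec_nonneg (v i)

theorem trace_transpose_mul_add_mul_eq_zero {R : Type*} [CommRing R] [Fintype m]
    {A V : Matrix m n R} {M : Matrix n n R} (hM : M.IsSymm) (hAM : A * M = 0) :
    ((Vᵀ * A + Aᵀ * V) * M).trace = 0 := by
  have hMA : M * Aᵀ = 0 := by rw [← hM.eq, ← transpose_mul, hAM, transpose_zero]
  rw [Matrix.add_mul, trace_add, Matrix.mul_assoc, hAM, Matrix.mul_zero, trace_zero, zero_add,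
    trace_mul_comm, ← Matrix.mul_assoc, hMA, Matrix.zero_mul, trace_zero]

theorem dotProduct_mulVec_le_trace_mul {Q X : Matrix n n ℝ} {x : n → ℝ} (hQ : Q.PosSemidef)
    (hX : (X - vecMulVec x x).PosSemidef) : x ⬝ᵥ Q *ᵥ x ≤ (Q * X).trace :=
  sub_nonneg.mp (trace_mul_sub_vecMulVec_self Q X x ▸ hQ.trace_mul_nonneg hX)

theorem dotProduct_mulVec_le_trace_mul_of_posSemidef_add [Fintype m]
    {Q X : Matrix n n ℝ} {A V : Matrix m n ℝ} {x : n → ℝ}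
    (hQV : (Q + (1 / 2 : ℝ) • (Vᵀ * A + Aᵀ * V)).PosSemidef)
    (hAX : A * X = vecMulVec (A *ᵥ x) x) (hX : (X - vecMulVec x x).PosSemidef) :
    x ⬝ᵥ Q *ᵥ x ≤ (Q * X).trace := by
  have hAM : A * (X - vecMulVec x x) = 0 := by rw [Matrix.mul_sub, hAX, mul_vecMulVec, sub_self]
  have hS := trace_transpose_mul_add_mul_eq_zero (V := V) (isHermitian_iff_isSymm.mp hX.1) hAM
  have h := hQV.trace_mul_nonneg hX
  rw [Matrix.add_mul, trace_add, Matrix.smul_mul, trace_smul, hS, smul_zero, add_zero,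
    trace_mul_sub_vecMulVec_self] at h
  exact sub_nonneg.mp h

end Matrix

theorem enhanced_sdp_relaxation_equiv_general
    (n m d : ℕ)
    (P0 : Matrix (Fin n) (Fin n) ℝ) (P : Fin d → Matrix (Fin n) (Fin n) ℝ)
    (q0 : Fin n → ℝ) (q : Fin d → Fin n → ℝ) (r0 : ℝ) (r : Fin d → ℝ)
    (A : Matrix (Fin m) (Fin n) ℝ) (b : Fin m → ℝ)
    (hP : ∀ l, (P l).PosSemidef)
    (hV : ∃ V : Matrix (Fin m) (Fin n) ℝ,
      (P0 + (1 / 2 : ℝ) • (V.transpose * A + A.transpose * V)).PosSemidef)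
    (FeasP : (Fin n → ℝ) → Prop)
    (hFeasP : ∀ x, FeasP x ↔
      ((∀ l, dotProduct x ((P l).mulVec x) + 2 * dotProduct (q l) x + r l ≤ 0) ∧
        A.mulVec x = b))
    (objP : (Fin n → ℝ) → ℝ)
    (hobjP : ∀ x, objP x = dotProduct x (P0.mulVec x) + 2 * dotProduct q0 x + r0)
    (FeasD : (Fin n → ℝ) → Matrix (Fin n) (Fin n) ℝ → Prop)
    (hFeasD : ∀ x X, FeasD x X ↔
      ((∀ l, ((P l) * X).trace + 2 * dotProduct (q l) x + r l ≤ 0) ∧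
        A.mulVec x = b ∧
        A * X = Matrix.of (fun (i : Fin m) (j : Fin n) => b i * x j) ∧
        (X - Matrix.vecMulVec x x).PosSemidef))
    (objD : (Fin n → ℝ) → Matrix (Fin n) (Fin n) ℝ → ℝ)
    (hobjD : ∀ x X, objD x X = (P0 * X).trace + 2 * dotProduct q0 x + r0) :
    sInf {v : EReal | ∃ x, FeasP x ∧ v = (objP x : EReal)} =
      sInf {v : EReal | ∃ x X, FeasD x X ∧ v = (objD x X : EReal)} ∧
    ∀ x X, FeasD x X →
      (objD x X : EReal) = sInf {v : EReal | ∃ x X, FeasD x X ∧ v = (objD x X : EReal)} →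
      (FeasP x ∧ (objP x : EReal) = sInf {v : EReal | ∃ x, FeasP x ∧ v = (objP x : EReal)}) := by
  obtain ⟨V, hV⟩ := hV
  have hlift : ∀ x, FeasP x → ∃ X, FeasD x X ∧ objD x X ≤ objP x := by
    intro x hx
    obtain ⟨hcon, hAx⟩ := (hFeasP x).mp hx
    refine ⟨vecMulVec x x, (hFeasD x _).mpr ⟨fun l => ?_, hAx, ?_, ?_⟩, ?_⟩
    · rw [trace_mul_vecMulVec_self]; exact hcon l
    · rw [mul_vecMulVec, hAx]; rfl
    · rw [sub_self]; exact PosSemidef.zero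
    · rw [hobjD, hobjP, trace_mul_vecMulVec_self]
  have hproj : ∀ x X, FeasD x X → FeasP x ∧ objP x ≤ objD x X := by
    intro x X hxX
    obtain ⟨hcon, hAx, hAX, hX⟩ := (hFeasD x X).mp hxX
    refine ⟨(hFeasP x).mpr ⟨fun l => ?_, hAx⟩, ?_⟩
    · linarith [hcon l, dotProduct_mulVec_le_trace_mul (hP l) hX]
    · have hAX' : A * X = vecMulVec (A *ᵥ x) x := by rw [hAx]; exact hAX
      rw [hobjP, hobjD]
      linarith [dotProduct_mulVec_le_trace_mul_of_posSemidef_add hV hAX' hX]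
  exact ⟨sInf_relaxation_eq hlift hproj, fun x X => optimal_of_relaxation_optimal hlift hproj⟩

/-- Equivalence of the nonconvex quadratic problem (P) and its enhanced semidefinite
relaxation (D3): if every `P_l ⪰ 0` (l ≥ 1), there is `V` with
`P₀ + (1/2)(VᵀA + AᵀV) ⪰ 0`, and (P) is feasible, then the optimal values of (P) and
(D3) coincide (as extended reals), and any optimal `(x̃, X̃)` of (D3) yields an optimal
`x̃` for (P). -/
theorem enhanced_sdp_relaxation_equiv
    (n m d : ℕ)
    (P0 : Matrix (Fin n) (Fin n) ℝ) (P : Fin d → Matrix (Fin n) (Fin n) ℝ)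
    (q0 : Fin n → ℝ) (q : Fin d → Fin n → ℝ) (r0 : ℝ) (r : Fin d → ℝ)
    (A : Matrix (Fin m) (Fin n) ℝ) (b : Fin m → ℝ)
    (hP : ∀ l, (P l).PosSemidef)
    (hV : ∃ V : Matrix (Fin m) (Fin n) ℝ,
      (P0 + (1 / 2 : ℝ) • (V.transpose * A + A.transpose * V)).PosSemidef)
    (FeasP : (Fin n → ℝ) → Prop)
    (hFeasP : ∀ x, FeasP x ↔
      ((∀ l, dotProduct x ((P l).mulVec x) + 2 * dotProduct (q l) x + r l ≤ 0) ∧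
        A.mulVec x = b))
    (objP : (Fin n → ℝ) → ℝ)
    (hobjP : ∀ x, objP x = dotProduct x (P0.mulVec x) + 2 * dotProduct q0 x + r0)
    (FeasD : (Fin n → ℝ) → Matrix (Fin n) (Fin n) ℝ → Prop)
    (hFeasD : ∀ x X, FeasD x X ↔
      ((∀ l, ((P l) * X).trace + 2 * dotProduct (q l) x + r l ≤ 0) ∧
        A.mulVec x = b ∧
        A * X = Matrix.of (fun (i : Fin m) (j : Fin n) => b i * x j) ∧
        (X - Matrix.vecMulVec x x).PosSemidef))
    (objD : (Fin n → ℝ) → Matrix (Fin n) (Fin n) ℝ → ℝ)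
    (hobjD : ∀ x X, objD x X = (P0 * X).trace + 2 * dotProduct q0 x + r0)
    (hfeas : ∃ x, FeasP x) :
    sInf {v : EReal | ∃ x, FeasP x ∧ v = (objP x : EReal)} =
      sInf {v : EReal | ∃ x X, FeasD x X ∧ v = (objD x X : EReal)} ∧
    ∀ x X, FeasD x X →
      (objD x X : EReal) = sInf {v : EReal | ∃ x X, FeasD x X ∧ v = (objD x X : EReal)} →
      (FeasP x ∧ (objP x : EReal) = sInf {v : EReal | ∃ x, FeasP x ∧ v = (objP x : EReal)}) :=
  enhanced_sdp_relaxation_equiv_general n m d P0 P q0 q r0 r A b hP hV FeasP hFeasP objP hobjP FeasD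
    hFeasD objD hobjD
end
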